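/- Convergence rate of the volume hierarchy: Under the hypotheses of the effective Putinar degree bound for volume computation — namely X := S(h) ⊆ K := [−1,1]^m = S(f) with f := (1−x₁²,…,1−x_m²), the effective Putinar hypothesis for (h, γ₁, Ł) and (f, γ₂, 1), Ł̂ := max(Ł,1), and the existence of c_G ≥ 1, C > 0 such that for every d ≥ 1 there is a polynomial w_d of degree ≤ d with w_d ≥ 1 on X, w_d ≥ 0 on K, sup_K w_d ≤ c_G and ∫_K w_d dλ ≤ λ(X) + C/(2d) — there exist a constant C'' > 0 and ℓ₀ ∈ ℕ such that for all ℓ ≥ ℓ₀, 0 ≤ d_X^ℓ − λ(X) ≤ C''·ℓ^{−1/(6mŁ̂)}, where d_X^ℓ := inf{∫_K w dλ : w ∈ ℝ[x], w − 1 ∈ Q_ℓ(h), w ∈ Q_ℓ(f)} and λ denotes Lebesgue measure. -/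

import Mathlib

open MvPolynomial

/-- A polynomial is a sum of squares. -/
def IsSOS {σ : Type*} (q : MvPolynomial σ ℝ) : Prop :=
  ∃ (k : ℕ) (p : Fin k → MvPolynomial σ ℝ), q = ∑ i, (p i) ^ 2

/-- Membership in the truncated quadratic module `Q_ℓ(h)`. -/
def memQM {σ : Type*} {r : ℕ} (h : Fin r → MvPolynomial σ ℝ) (ℓ : ℕ)
    (q : MvPolynomial σ ℝ) : Prop :=
  ∃ (σ₀ : MvPolynomial σ ℝ) (s : Fin r → MvPolynomial σ ℝ),
    IsSOS σ₀ ∧ (∀ i, IsSOS (s i)) ∧ σ₀.totalDegree ≤ 2 * ℓ ∧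
    (∀ i, (s i * h i).totalDegree ≤ 2 * ℓ) ∧ q = σ₀ + ∑ i, s i * h i

/-- The basic closed semialgebraic set `S(h)`. -/
def semialgSet {σ : Type*} {r : ℕ} (h : Fin r → MvPolynomial σ ℝ) :
    Set (σ → ℝ) := {x | ∀ i, 0 ≤ eval x (h i)}

/-- The box `[-1,1]^σ`. -/
def unitBox (σ : Type*) : Set (σ → ℝ) := {x | ∀ i, x i ∈ Set.Icc (-1 : ℝ) 1}

/-- `‖p‖ := sup_{[-1,1]^m} |p|`. -/
noncomputable def polyNorm {σ : Type*} (p : MvPolynomial σ ℝ) : ℝ :=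
  ⨆ x : unitBox σ, |eval (x : σ → ℝ) p|

/-- `min_S p`. -/
noncomputable def polyMinOn {σ : Type*} (S : Set (σ → ℝ)) (p : MvPolynomial σ ℝ) : ℝ :=
  sInf ((fun x => eval x p) '' S)

section helpers

open MeasureTheory

lemma isSOS_nonneg {σ : Type*} {q : MvPolynomial σ ℝ} (hq : IsSOS q) (x : σ → ℝ) :
    0 ≤ eval x q := by
  obtain ⟨k, p, rfl⟩ := hq
  simp only [map_sum, map_pow]
  exact Finset.sum_nonneg fun i _ => sq_nonneg _

lemma isSOS_zero {σ : Type*} : IsSOS (0 : MvPolynomial σ ℝ) := ⟨0, fun i => i.elim0, by simp⟩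

lemma isSOS_sq {σ : Type*} (p : MvPolynomial σ ℝ) : IsSOS (p ^ 2) := ⟨1, fun _ => p, by simp⟩

lemma isSOS_add {σ : Type*} {p q : MvPolynomial σ ℝ} (hp : IsSOS p) (hq : IsSOS q) :
    IsSOS (p + q) := by
  obtain ⟨a, u, rfl⟩ := hp
  obtain ⟨b, v, rfl⟩ := hq
  exact ⟨a + b, Fin.append u v, by rw [Fin.sum_univ_add]; simp [Fin.append]⟩

lemma isSOS_sum {σ ι : Type*} (s : Finset ι) (f : ι → MvPolynomial σ ℝ)
    (hf : ∀ i ∈ s, IsSOS (f i)) : IsSOS (∑ i ∈ s, f i) := by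
  classical
  induction s using Finset.induction_on with
  | empty => simpa using isSOS_zero
  | @insert a s hx ih =>
    rw [Finset.sum_insert hx]
    exact isSOS_add (hf _ (Finset.mem_insert_self _ _))
      (ih fun i hi => hf i (Finset.mem_insert_of_mem hi))

lemma isSOS_mul {σ : Type*} {p q : MvPolynomial σ ℝ} (hp : IsSOS p) (hq : IsSOS q) :
    IsSOS (p * q) := by
  obtain ⟨a, u, rfl⟩ := hp
  obtain ⟨b, v, rfl⟩ := hq
  rw [Finset.sum_mul_sum]
  refine isSOS_sum _ _ fun i _ => isSOS_sum _ _ fun j _ => ?_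
  rw [← mul_pow]
  exact isSOS_sq _

lemma isSOS_C {σ : Type*} {c : ℝ} (hc : 0 ≤ c) : IsSOS (C c : MvPolynomial σ ℝ) :=
  ⟨1, fun _ => C (Real.sqrt c), by
    rw [Fin.sum_univ_one, ← map_pow, Real.sq_sqrt hc]⟩

lemma memQM_nonneg {σ : Type*} {r : ℕ} {h : Fin r → MvPolynomial σ ℝ} {ℓ : ℕ}
    {q : MvPolynomial σ ℝ} (hq : memQM h ℓ q) {x : σ → ℝ} (hx : x ∈ semialgSet h) :
    0 ≤ eval x q := by
  obtain ⟨σ₀, s, hσ₀, hs, -, -, rfl⟩ := hq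
  simp only [map_add, map_sum, map_mul]
  exact add_nonneg (isSOS_nonneg hσ₀ x)
    (Finset.sum_nonneg fun i _ => mul_nonneg (isSOS_nonneg (hs i) x) (hx i))

lemma semialgSet_f_eq (m : ℕ) :
    semialgSet (fun i : Fin m => (1 - X i ^ 2 : MvPolynomial (Fin m) ℝ)) = unitBox (Fin m) := by
  ext x
  simp only [semialgSet, unitBox, Set.mem_setOf_eq, map_sub, map_one, map_pow, eval_X,
    Set.mem_Icc]
  constructor
  · intro hx i
    have hxi := hx i
    constructor <;> nlinarith
  · intro hx i
    have hxi := hx i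
    nlinarith [hxi.1, hxi.2]

lemma unitBox_eq_pi (m : ℕ) :
    unitBox (Fin m) = Set.pi Set.univ (fun _ : Fin m => Set.Icc (-1:ℝ) 1) := by
  ext x; simp only [unitBox, Set.mem_setOf_eq, Set.mem_pi, Set.mem_univ, forall_true_left,
    Set.mem_Icc, true_implies]

lemma isCompact_unitBox (m : ℕ) : IsCompact (unitBox (Fin m)) := by
  rw [unitBox_eq_pi]; exact isCompact_univ_pi fun _ => isCompact_Icc

lemma measurableSet_unitBox (m : ℕ) : MeasurableSet (unitBox (Fin m)) :=
  (isCompact_unitBox m).isClosed.measurableSet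

lemma zero_mem_unitBox (m : ℕ) : (fun _ => (0:ℝ)) ∈ unitBox (Fin m) := by
  intro i; constructor <;> norm_num

instance unitBox_nonempty_inst (m : ℕ) : Nonempty (unitBox (Fin m)) :=
  ⟨⟨_, zero_mem_unitBox m⟩⟩

lemma integrableOn_eval {m : ℕ} (p : MvPolynomial (Fin m) ℝ) :
    IntegrableOn (fun x => eval x p) (unitBox (Fin m)) volume :=
  (MvPolynomial.continuous_eval p).continuousOn.integrableOn_compact (isCompact_unitBox m)

lemma polyNorm_nonneg {σ : Type*} (p : MvPolynomial σ ℝ) : 0 ≤ polyNorm p :=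
  Real.iSup_nonneg fun _ => abs_nonneg _

lemma polyNorm_le {m : ℕ} {c : ℝ} {p : MvPolynomial (Fin m) ℝ}
    (hc : ∀ x ∈ unitBox (Fin m), |eval x p| ≤ c) : polyNorm p ≤ c :=
  ciSup_le fun x => hc x x.2

lemma le_minOn {m : ℕ} {S : Set (Fin m → ℝ)} (hS : S.Nonempty) {p : MvPolynomial (Fin m) ℝ}
    {c : ℝ} (hc : ∀ x ∈ S, c ≤ eval x p) : c ≤ polyMinOn S p :=
  le_csInf (hS.image _) (by rintro _ ⟨x, hx, rfl⟩; exact hc x hx)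

lemma measurableSet_semialgSet {m r : ℕ} (h : Fin r → MvPolynomial (Fin m) ℝ) :
    MeasurableSet (semialgSet h) := by
  have : semialgSet h = ⋂ i, (fun x => eval x (h i)) ⁻¹' Set.Ici 0 := by
    ext x; simp [semialgSet]
  rw [this]
  exact MeasurableSet.iInter fun i =>
    ((isClosed_Ici.preimage (MvPolynomial.continuous_eval _))).measurableSet

lemma volume_lower_bound {m r : ℕ} {h : Fin r → MvPolynomial (Fin m) ℝ}
    (hsub : semialgSet h ⊆ unitBox (Fin m)) (w : MvPolynomial (Fin m) ℝ)
    (h1 : ∀ x ∈ semialgSet h, 1 ≤ eval x w) (h0 : ∀ x ∈ unitBox (Fin m), 0 ≤ eval x w) :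
    (volume (semialgSet h)).toReal ≤ ∫ x in unitBox (Fin m), eval x w := by
  have hXm := measurableSet_semialgSet h
  have hKm := measurableSet_unitBox m
  have hint : IntegrableOn (fun x => eval x w) (unitBox (Fin m)) volume := integrableOn_eval w
  have hXlt : volume (semialgSet h) < ⊤ :=
    (measure_mono hsub).trans_lt (isCompact_unitBox m).measure_lt_top
  calc (volume (semialgSet h)).toReal = ∫ _ in semialgSet h, (1:ℝ) := by
        rw [setIntegral_const, smul_eq_mul, mul_one]; rfl
    _ ≤ ∫ x in semialgSet h, eval x w := by
        refine setIntegral_mono_on (integrableOn_const hXlt.ne) (hint.mono_set hsub)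
          hXm h1
    _ ≤ ∫ x in unitBox (Fin m), eval x w := by
        refine setIntegral_mono_set hint ((ae_restrict_iff' hKm).2 (ae_of_all _ h0)) ?_
        exact HasSubset.Subset.eventuallyLE hsub

lemma key_chain {γ F c E D R s aa bb : ℝ} (hγ : 0 < γ) (hF : 1 ≤ F) (hc : 0 < c)
    (hcE : c ≤ E) (hs1 : 1 ≤ s) (hD : D ≤ F * s) (hD0 : 0 ≤ D)
    (hR : R ≤ c / E * s) (hR0 : 0 ≤ R) (haa : 1 ≤ aa) (hbb : 1 ≤ bb)
    (hcoef : γ * F ^ aa * (c / E) ≤ 1) :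
    γ * D ^ aa * R ^ bb ≤ s ^ (aa + bb) := by
  have hE : 0 < E := lt_of_lt_of_le hc hcE
  have hce : 0 < c / E := div_pos hc hE
  have hce1 : c / E ≤ 1 := (div_le_one hE).2 hcE
  have hs0 : 0 < s := lt_of_lt_of_le one_pos hs1
  have hF0 : 0 < F := lt_of_lt_of_le one_pos hF
  have haa0 : (0:ℝ) ≤ aa := le_trans zero_le_one haa
  have hbb0 : (0:ℝ) ≤ bb := le_trans zero_le_one hbb
  have h1 : γ * D ^ aa * R ^ bb ≤ γ * (F * s) ^ aa * (c / E * s) ^ bb := by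
    have hDa : D ^ aa ≤ (F * s) ^ aa := Real.rpow_le_rpow hD0 hD haa0
    have hRb : R ^ bb ≤ (c / E * s) ^ bb := Real.rpow_le_rpow hR0 hR hbb0
    have h2 : γ * D ^ aa ≤ γ * (F * s) ^ aa :=
      mul_le_mul_of_nonneg_left hDa hγ.le
    exact mul_le_mul h2 hRb (Real.rpow_nonneg hR0 bb)
      (by positivity)
  have h3 : γ * (F * s) ^ aa * (c / E * s) ^ bb
      = (γ * F ^ aa * (c / E) ^ bb) * (s ^ aa * s ^ bb) := by
    rw [Real.mul_rpow hF0.le hs0.le, Real.mul_rpow hce.le hs0.le]; ring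
  have h4 : (c / E) ^ bb ≤ c / E := by
    have := Real.rpow_le_rpow_of_exponent_ge hce hce1 hbb
    rwa [Real.rpow_one] at this
  have h5 : γ * F ^ aa * (c / E) ^ bb ≤ 1 :=
    le_trans (mul_le_mul_of_nonneg_left h4 (by positivity)) hcoef
  have h6 : s ^ aa * s ^ bb = s ^ (aa + bb) := (Real.rpow_add hs0 aa bb).symm
  calc γ * D ^ aa * R ^ bb ≤ (γ * F ^ aa * (c / E) ^ bb) * (s ^ aa * s ^ bb) := by
        rw [← h3]; exact h1
    _ ≤ 1 * (s ^ aa * s ^ bb) := by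
        refine mul_le_mul_of_nonneg_right h5 ?_
        positivity
    _ = s ^ (aa + bb) := by rw [one_mul, h6]

end helpers

lemma one_le_mul_real {a b : ℝ} (ha : 1 ≤ a) (hb : 1 ≤ b) : 1 ≤ a * b := by nlinarith

section emptyHelpers

lemma pow_even_eq {x : ℝ} (k : ℕ) : (x ^ k) ^ 2 = x ^ (2 * k) := by
  rw [← pow_mul, mul_comm]

lemma term_upper {B M v : ℝ} (k : ℕ) (hB1 : 1 ≤ B) (hM : M = B + 1) (hv : |v| ≤ B) :
    ((M - v) ^ k) ^ 2 * v ≤ M ^ (2 * k) * B := by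
  have hvB := abs_le.1 hv
  have hM0 : (0:ℝ) ≤ M := by rw [hM]; linarith
  rw [pow_even_eq]
  rcases le_or_gt v 0 with hv0 | hv0
  · have h1 : (M - v) ^ (2 * k) * v ≤ 0 :=
      mul_nonpos_of_nonneg_of_nonpos (pow_nonneg (by rw [hM]; linarith) _) hv0
    have h2 : (0:ℝ) ≤ M ^ (2 * k) * B := mul_nonneg (pow_nonneg hM0 _) (by linarith)
    linarith
  · have h1 : (M - v) ^ (2 * k) ≤ M ^ (2 * k) :=
      pow_le_pow_left₀ (by rw [hM]; linarith) (by linarith) _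
    have h2 : (M - v) ^ (2 * k) * v ≤ M ^ (2 * k) * v := mul_le_mul_of_nonneg_right h1 hv0.le
    have h3 : M ^ (2 * k) * v ≤ M ^ (2 * k) * B :=
      mul_le_mul_of_nonneg_left hvB.2 (pow_nonneg hM0 _)
    linarith

lemma G_upper {r : ℕ} (v : Fin r → ℝ) (B M δ₀ : ℝ) (k : ℕ)
    (hB1 : 1 ≤ B) (hM : M = B + 1) (hδ₀ : 0 < δ₀)
    (hv : ∀ i, |v i| ≤ B) (i₀ : Fin r) (hi₀ : v i₀ ≤ -δ₀) :
    ∑ i, ((M - v i) ^ k) ^ 2 * v i ≤ (r:ℝ) * B * M ^ (2 * k) - δ₀ * (M + δ₀) ^ (2 * k) := by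
  classical
  have hM0 : (0:ℝ) ≤ M := by rw [hM]; linarith
  have hterm : ∀ i, ((M - v i) ^ k) ^ 2 * v i ≤ M ^ (2 * k) * B :=
    fun i => term_upper k hB1 hM (hv i)
  have hsplit : ((M - v i₀) ^ k) ^ 2 * v i₀ + ∑ i ∈ Finset.univ.erase i₀,
      ((M - v i) ^ k) ^ 2 * v i = ∑ i, ((M - v i) ^ k) ^ 2 * v i :=
    Finset.add_sum_erase Finset.univ (fun i => ((M - v i) ^ k) ^ 2 * v i) (Finset.mem_univ i₀)
  have hstar : ((M - v i₀) ^ k) ^ 2 * v i₀ ≤ -(δ₀ * (M + δ₀) ^ (2 * k)) := by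
    rw [pow_even_eq]
    have h1 : (M + δ₀) ^ (2 * k) ≤ (M - v i₀) ^ (2 * k) :=
      pow_le_pow_left₀ (by linarith) (by linarith) _
    have h2 : (M - v i₀) ^ (2 * k) * v i₀ ≤ (M + δ₀) ^ (2 * k) * v i₀ :=
      mul_le_mul_of_nonpos_right h1 (by linarith)
    have h3 : (M + δ₀) ^ (2 * k) * v i₀ ≤ (M + δ₀) ^ (2 * k) * (-δ₀) :=
      mul_le_mul_of_nonneg_left hi₀ (pow_nonneg (by linarith) _)
    have h4 : (M + δ₀) ^ (2 * k) * (-δ₀) = -(δ₀ * (M + δ₀) ^ (2 * k)) := by ring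
    linarith
  have hrest : ∑ i ∈ Finset.univ.erase i₀, ((M - v i) ^ k) ^ 2 * v i
      ≤ (r:ℝ) * (M ^ (2 * k) * B) := by
    have h1 := Finset.sum_le_card_nsmul (Finset.univ.erase i₀)
      (fun i => ((M - v i) ^ k) ^ 2 * v i) (M ^ (2 * k) * B) (fun i _ => hterm i)
    rw [nsmul_eq_mul] at h1
    have hcard : ((Finset.univ.erase i₀).card : ℝ) ≤ (r:ℝ) := by
      have := Finset.card_erase_le (s := (Finset.univ : Finset (Fin r))) (a := i₀)
      have h2 : (Finset.univ : Finset (Fin r)).card = r := by simp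
      exact_mod_cast le_trans this (le_of_eq h2)
    have h3 : (0:ℝ) ≤ M ^ (2 * k) * B := mul_nonneg (pow_nonneg hM0 _) (by linarith)
    exact le_trans h1 (mul_le_mul_of_nonneg_right hcard h3)
  have h5 : (r:ℝ) * (M ^ (2 * k) * B) = (r:ℝ) * B * M ^ (2 * k) := by ring
  linarith

lemma G_lower {r : ℕ} (v : Fin r → ℝ) (B M : ℝ) (k : ℕ)
    (hB1 : 1 ≤ B) (hM : M = B + 1) (hv : ∀ i, |v i| ≤ B) :
    -((r:ℝ) * B * (M + B) ^ (2 * k)) ≤ ∑ i, ((M - v i) ^ k) ^ 2 * v i := by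
  have hM0 : (0:ℝ) ≤ M := by rw [hM]; linarith
  have hterm : ∀ i, -(B * (M + B) ^ (2 * k)) ≤ ((M - v i) ^ k) ^ 2 * v i := by
    intro i
    have hvB := abs_le.1 (hv i)
    have habs : |((M - v i) ^ k) ^ 2 * v i| ≤ (M + B) ^ (2 * k) * B := by
      rw [abs_mul, pow_even_eq, abs_pow]
      have h1 : |M - v i| ≤ M + B := by
        rw [abs_sub_comm, abs_le]
        constructor <;> linarith
      have h2 : |M - v i| ^ (2 * k) ≤ (M + B) ^ (2 * k) :=
        pow_le_pow_left₀ (abs_nonneg _) h1 _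
      exact mul_le_mul h2 (hv i) (abs_nonneg _) (pow_nonneg (by linarith) _)
    have h3 := neg_abs_le (((M - v i) ^ k) ^ 2 * v i)
    have h4 : (M + B) ^ (2 * k) * B = B * (M + B) ^ (2 * k) := by ring
    linarith
  have h1 := Finset.card_nsmul_le_sum Finset.univ
    (fun i => ((M - v i) ^ k) ^ 2 * v i) (-(B * (M + B) ^ (2 * k))) (fun i _ => hterm i)
  rw [nsmul_eq_mul, Finset.card_univ, Fintype.card_fin] at h1
  have h2 : (r:ℝ) * -(B * (M + B) ^ (2 * k)) = -((r:ℝ) * B * (M + B) ^ (2 * k)) := by ring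
  linarith

lemma bernoulli_bound {η : ℝ} (h0 : 0 < η) (h1 : η ≤ 1) {j : ℕ} (hj : 1 ≤ j) :
    ((1 - η) ^ 2) ^ j ≤ (2 * (j:ℝ) * η)⁻¹ := by
  have hj1 : (1:ℝ) ≤ (j:ℝ) := by exact_mod_cast hj
  have hj0 : (0:ℝ) < 2 * (j:ℝ) * η := by nlinarith
  have hsq : (1 - η) ^ 2 ≤ (1 + 2 * η)⁻¹ := by
    rw [← one_div, le_div_iff₀ (by linarith)]
    nlinarith [mul_nonneg (sq_nonneg η) (by linarith : (0:ℝ) ≤ 3 - 2 * η)]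
  have h3 : ((1 - η) ^ 2) ^ j ≤ ((1 + 2 * η)⁻¹) ^ j := pow_le_pow_left₀ (sq_nonneg _) hsq j
  rw [inv_pow] at h3
  have h5 : 1 + (j:ℝ) * (2 * η) ≤ (1 + 2 * η) ^ j := one_add_mul_le_pow (by linarith) j
  have h6 : ((1 + 2 * η) ^ j)⁻¹ ≤ (1 + (j:ℝ) * (2 * η))⁻¹ := by
    apply inv_anti₀ (by nlinarith) h5
  have h7 : (1 + (j:ℝ) * (2 * η))⁻¹ ≤ (2 * (j:ℝ) * η)⁻¹ := by
    apply inv_anti₀ hj0 (by nlinarith)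
  linarith

end emptyHelpers

lemma num_ge {M δ₀ rB : ℝ} (hM0 : 0 < M) (hδ₀ : 0 < δ₀) {k2 : ℕ}
    (hineq : rB + 1 ≤ δ₀ * ((M + δ₀) / M) ^ k2) :
    M ^ k2 ≤ δ₀ * (M + δ₀) ^ k2 - rB * M ^ k2 := by
  have hMq : (M + δ₀) ^ k2 = M ^ k2 * ((M + δ₀) / M) ^ k2 := by
    rw [← mul_pow]
    congr 1
    field_simp
  have hMk0 : (0:ℝ) < M ^ k2 := pow_pos hM0 _
  rw [hMq]
  nlinarith [mul_le_mul_of_nonneg_left hineq hMk0.le]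

lemma w0_bounds {Gx R num : ℝ} (hR : 1 ≤ R) (hG1 : -(R - 1) ≤ Gx) (hG2 : Gx ≤ -num) :
    0 ≤ 1 + R⁻¹ * Gx ∧ 1 + R⁻¹ * Gx ≤ 1 - num / R := by
  have hR0 : (0:ℝ) < R := by linarith
  constructor
  · have h1 : R⁻¹ * (-(R - 1)) ≤ R⁻¹ * Gx :=
      mul_le_mul_of_nonneg_left hG1 (inv_nonneg.2 hR0.le)
    have h2 : R⁻¹ * (-(R - 1)) = -((R - 1) / R) := by field_simp
    have h3 : (R - 1) / R ≤ 1 := by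
      rw [div_le_one hR0]; linarith
    linarith
  · have h1 : R⁻¹ * Gx ≤ R⁻¹ * (-num) := mul_le_mul_of_nonneg_left hG2 (inv_nonneg.2 hR0.le)
    have h2 : R⁻¹ * (-num) = -(num / R) := by field_simp
    linarith

lemma u_le_one {η : ℝ} (h0 : 0 < η) (h1 : η ≤ 1) (j : ℕ) : ((1 - η) ^ 2) ^ j ≤ 1 := by
  have h2 : (0:ℝ) ≤ (1 - η) ^ 2 := sq_nonneg _
  have h3 : (1 - η) ^ 2 ≤ 1 := by nlinarith
  exact pow_le_one₀ h2 h3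

/-- The effective Putinar hypothesis for `(h, γ, L)`. -/
def EffectivePutinar {σ : Type*} {r : ℕ} (m : ℕ) (h : Fin r → MvPolynomial σ ℝ)
    (γ L : ℝ) : Prop :=
  ∀ (p : MvPolynomial σ ℝ) (ℓ : ℕ),
    0 < polyMinOn (semialgSet h) p →
    γ * (p.totalDegree : ℝ) ^ (3.5 * (m : ℝ) * L) *
        (polyNorm p / polyMinOn (semialgSet h) p) ^ (2.5 * (m : ℝ) * L) ≤ (ℓ : ℝ) →
    memQM h ℓ p

set_option maxHeartbeats 2000000 in
/-- **Convergence rate of the volume hierarchy.** -/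
theorem volume_hierarchy_convergence_rate
    {m r : ℕ} (hm : 1 ≤ m)
    (h : Fin r → MvPolynomial (Fin m) ℝ)
    (hsub : semialgSet h ⊆ unitBox (Fin m))
    (γ₁ γ₂ L : ℝ) (hγ₁ : 1 ≤ γ₁) (hγ₂ : 1 ≤ γ₂) (hL : 1 ≤ L)
    (hput₁ : EffectivePutinar m h γ₁ L)
    (hput₂ : EffectivePutinar m (fun i : Fin m => 1 - X i ^ 2) γ₂ 1)
    (cG Cc : ℝ) (hcG : 1 ≤ cG) (hCc : 0 < Cc)
    (happ : ∀ d : ℕ, 1 ≤ d → ∃ w : MvPolynomial (Fin m) ℝ,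
      w.totalDegree ≤ d ∧ (∀ x ∈ semialgSet h, 1 ≤ eval x w) ∧
      (∀ x ∈ unitBox (Fin m), 0 ≤ eval x w) ∧
      (∀ x ∈ unitBox (Fin m), eval x w ≤ cG) ∧
      (∫ x in unitBox (Fin m), eval x w) ≤
        (MeasureTheory.volume (semialgSet h)).toReal + Cc / (2 * d)) :
    ∃ C'' : ℝ, 0 < C'' ∧ ∃ ℓ₀ : ℕ, ∀ ℓ : ℕ, ℓ₀ ≤ ℓ →
      0 ≤ sInf {t : ℝ | ∃ w : MvPolynomial (Fin m) ℝ,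
            memQM h ℓ (w - 1) ∧ memQM (fun i : Fin m => 1 - X i ^ 2) ℓ w ∧
            t = ∫ x in unitBox (Fin m), eval x w} -
          (MeasureTheory.volume (semialgSet h)).toReal ∧
        sInf {t : ℝ | ∃ w : MvPolynomial (Fin m) ℝ,
            memQM h ℓ (w - 1) ∧ memQM (fun i : Fin m => 1 - X i ^ 2) ℓ w ∧
            t = ∫ x in unitBox (Fin m), eval x w} -
          (MeasureTheory.volume (semialgSet h)).toReal
          ≤ C'' * (ℓ : ℝ) ^ (-(1 / (6 * (m : ℝ) * max L 1))) := by
  classical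
  have hKne : (unitBox (Fin m)).Nonempty := ⟨_, zero_mem_unitBox m⟩
  have hSf := semialgSet_f_eq m
  have hm1 : (1:ℝ) ≤ (m:ℝ) := by exact_mod_cast hm
  have hm0 : (0:ℝ) < (m:ℝ) := lt_of_lt_of_le one_pos hm1
  have hL0 : (0:ℝ) < L := lt_of_lt_of_le one_pos hL
  have hmaxL : max L 1 = L := max_eq_left hL
  have hγ₁0 : (0:ℝ) < γ₁ := lt_of_lt_of_le one_pos hγ₁
  have hγ₂0 : (0:ℝ) < γ₂ := lt_of_lt_of_le one_pos hγ₂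
  set δ : ℝ := (6 * (m:ℝ) * L)⁻¹ with hδdef
  have h6 : (0:ℝ) < 6 * (m:ℝ) * L := by positivity
  have hδ0 : 0 < δ := by rw [hδdef]; positivity
  have hδ6 : (6 * (m:ℝ) * L) * δ = 1 := mul_inv_cancel₀ (ne_of_gt h6)
  have h6m1 : (1:ℝ) ≤ 6 * (m:ℝ) * L := by nlinarith
  have hδ1 : δ ≤ 1 := by
    rw [hδdef]
    calc (6 * (m:ℝ) * L)⁻¹ ≤ 1⁻¹ := by gcongr
      _ = 1 := inv_one
  have hLinv : L⁻¹ ≤ 1 := by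
    calc L⁻¹ ≤ 1⁻¹ := by gcongr
      _ = 1 := inv_one
  set lam := (MeasureTheory.volume (semialgSet h)).toReal with hlam
  set V := (MeasureTheory.volume (unitBox (Fin m))).toReal with hVdef
  have hV0 : 0 ≤ V := ENNReal.toReal_nonneg
  set a₁ : ℝ := 3.5 * (m:ℝ) * L with ha₁
  set b₁ : ℝ := 2.5 * (m:ℝ) * L with hb₁
  set a₂ : ℝ := 3.5 * (m:ℝ) * 1 with ha₂
  set b₂ : ℝ := 2.5 * (m:ℝ) * 1 with hb₂
  have ha₁1 : 1 ≤ a₁ := by rw [ha₁]; nlinarith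
  have hb₁1 : 1 ≤ b₁ := by rw [hb₁]; nlinarith
  have ha₂1 : 1 ≤ a₂ := by rw [ha₂]; nlinarith
  have hb₂1 : 1 ≤ b₂ := by rw [hb₂]; nlinarith
  have hab1 : a₁ + b₁ = 6 * (m:ℝ) * L := by rw [ha₁, hb₁]; ring
  have hab2 : a₂ + b₂ = 6 * (m:ℝ) := by rw [ha₂, hb₂]; ring
  have hδab1 : δ * (a₁ + b₁) = 1 := by rw [hab1, mul_comm]; exact hδ6
  have hδab2 : δ * (a₂ + b₂) = L⁻¹ := by
    rw [hab2, hδdef]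
    field_simp
  set c : ℝ := cG + 2 with hcdef
  have hc0 : (0:ℝ) < c := by rw [hcdef]; linarith
  have hc1 : (1:ℝ) ≤ c := by rw [hcdef]; linarith
  -- lower bound facts, used in both cases
  have hTlbgen : ∀ (ℓ : ℕ) (w' : MvPolynomial (Fin m) ℝ), memQM h ℓ (w' - 1) →
      memQM (fun i : Fin m => 1 - X i ^ 2) ℓ w' →
      lam ≤ ∫ x in unitBox (Fin m), eval x w' := by
    intro ℓ w' hw'1 hw'2
    rw [hlam]
    refine volume_lower_bound hsub w' ?_ ?_
    · intro x hx
      have h0 := memQM_nonneg hw'1 hx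
      rw [map_sub, map_one] at h0
      linarith
    · intro x hx
      exact memQM_nonneg hw'2 (show x ∈ semialgSet _ by rw [hSf]; exact hx)
  rcases Set.eq_empty_or_nonempty (semialgSet h) with hXe | hne
  · -- empty case
    have hlam0 : lam = 0 := by rw [hlam, hXe]; simp
    -- uniform bound on the constraint polynomials over the box
    obtain ⟨B0, hB0⟩ := (isCompact_unitBox m).exists_bound_of_continuousOn
      (continuous_pi (fun i : Fin r => MvPolynomial.continuous_eval (h i))).continuousOn
    set B : ℝ := max B0 1 with hBdef
    have hB1 : (1:ℝ) ≤ B := le_max_right _ _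
    have hB : ∀ (i : Fin r), ∀ x ∈ unitBox (Fin m), |eval x (h i)| ≤ B := by
      intro i x hx
      have h1 := hB0 x hx
      have h2 : ‖(fun i : Fin r => eval x (h i)) i‖ ≤ ‖(fun i : Fin r => eval x (h i))‖ :=
        norm_le_pi_norm (fun i : Fin r => eval x (h i)) i
      rw [Real.norm_eq_abs] at h2
      calc |eval x (h i)| ≤ ‖(fun i : Fin r => eval x (h i))‖ := h2
        _ ≤ B0 := h1
        _ ≤ B := le_max_left _ _
    -- the constraints are uniformly violated on the box
    have hruniv : (Finset.univ : Finset (Fin r)).Nonempty := by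
      by_contra hcon
      have hie : IsEmpty (Fin r) := by
        rwa [Finset.univ_nonempty_iff, not_nonempty_iff] at hcon
      have h0 : (fun _ => (0:ℝ)) ∈ semialgSet h := fun i => (hie.false i).elim
      rw [hXe] at h0
      exact h0
    set g : (Fin m → ℝ) → ℝ := fun x => Finset.univ.inf' hruniv (fun i => eval x (h i))
      with hgdef
    have hgcont : Continuous g :=
      Continuous.finset_inf'_apply hruniv (fun i _ => MvPolynomial.continuous_eval (h i))
    obtain ⟨x₀, hx₀K, hx₀max⟩ :=
      (isCompact_unitBox m).exists_isMaxOn hKne hgcont.continuousOn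
    have hx₀not : x₀ ∉ semialgSet h := by rw [hXe]; exact Set.notMem_empty x₀
    have hgx₀neg : g x₀ < 0 := by
      by_contra hcon
      push_neg at hcon
      refine hx₀not fun i => le_trans hcon ?_
      exact Finset.inf'_le _ (Finset.mem_univ i)
    set δ₀ : ℝ := -g x₀ with hδ₀def
    have hδ₀pos : 0 < δ₀ := by rw [hδ₀def]; linarith
    have hgle : ∀ x ∈ unitBox (Fin m), ∃ i, eval x (h i) ≤ -δ₀ := by
      intro x hx
      obtain ⟨i, -, hieq⟩ := Finset.exists_mem_eq_inf' hruniv (fun i => eval x (h i))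
      refine ⟨i, ?_⟩
      have h1 : g x ≤ g x₀ := hx₀max hx
      have h2 : g x = eval x (h i) := hieq
      rw [hδ₀def]
      linarith
    set M : ℝ := B + 1 with hMdef
    have hM0 : (0:ℝ) < M := by rw [hMdef]; linarith
    have hq1 : 1 < (M + δ₀) / M := by
      rw [lt_div_iff₀ hM0]; linarith
    obtain ⟨k, hk⟩ := pow_unbounded_of_one_lt (((r:ℝ) * B + 1) / δ₀) hq1
    set num : ℝ := δ₀ * (M + δ₀) ^ (2 * k) - (r:ℝ) * B * M ^ (2 * k) with hnumdef
    have hnum : M ^ (2 * k) ≤ num := by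
      have hqk2 : ((M + δ₀) / M) ^ k ≤ ((M + δ₀) / M) ^ (2 * k) :=
        pow_le_pow_right₀ hq1.le (by omega)
      have h1 : ((r:ℝ) * B + 1) / δ₀ < ((M + δ₀) / M) ^ (2 * k) := lt_of_lt_of_le hk hqk2
      have h2 : (r:ℝ) * B + 1 ≤ δ₀ * ((M + δ₀) / M) ^ (2 * k) := by
        rw [div_lt_iff₀ hδ₀pos] at h1
        linarith
      rw [hnumdef]
      exact num_ge hM0 hδ₀pos h2
    have hnum0 : 0 < num := lt_of_lt_of_le (pow_pos hM0 (2 * k)) hnum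
    set R : ℝ := (r:ℝ) * B * (M + B) ^ (2 * k) + 1 with hRdef
    have hRaux : (0:ℝ) ≤ (r:ℝ) * B * (M + B) ^ (2 * k) :=
      mul_nonneg (mul_nonneg (Nat.cast_nonneg r) (by linarith)) (pow_nonneg (by linarith) _)
    have hR1 : (1:ℝ) ≤ R := by rw [hRdef]; linarith
    have hR0 : (0:ℝ) < R := by linarith
    set τ : ℝ := R⁻¹ with hτdef
    have hτ0 : 0 < τ := by rw [hτdef]; exact inv_pos.2 hR0
    set η : ℝ := num / R with hηdef
    have hη0 : 0 < η := div_pos hnum0 hR0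
    -- polynomial gadgets (independent of ℓ)
    set G : MvPolynomial (Fin m) ℝ := ∑ i, ((C M - h i) ^ k) ^ 2 * h i with hG
    set w₀ : MvPolynomial (Fin m) ℝ := 1 + C τ * G with hw₀
    have hevalG : ∀ x : Fin m → ℝ,
        eval x G = ∑ i, ((M - eval x (h i)) ^ k) ^ 2 * eval x (h i) := by
      intro x
      rw [hG]
      simp [map_sum, map_mul, map_pow, map_sub, eval_C]
    have hevalw₀ : ∀ x : Fin m → ℝ, eval x w₀ = 1 + τ * eval x G := by
      intro x
      rw [hw₀]
      simp [map_add, map_mul, map_one, eval_C]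
    have hw₀K : ∀ x ∈ unitBox (Fin m), 0 ≤ eval x w₀ ∧ eval x w₀ ≤ 1 - η := by
      intro x hx
      obtain ⟨i₁, hi₁⟩ := hgle x hx
      have hup := G_upper (fun i => eval x (h i)) B M δ₀ k hB1 hMdef hδ₀pos
        (fun i => hB i x hx) i₁ hi₁
      have hlo := G_lower (fun i => eval x (h i)) B M k hB1 hMdef (fun i => hB i x hx)
      rw [← hevalG x] at hup hlo
      have hG1 : -(R - 1) ≤ eval x G := by
        rw [hRdef]
        have heq : ((r:ℝ) * B * (M + B) ^ (2 * k) + 1 - 1)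
            = (r:ℝ) * B * (M + B) ^ (2 * k) := by ring
        rw [heq]
        exact hlo
      have hG2 : eval x G ≤ -num := by
        rw [hnumdef]
        linarith
      have hb := w0_bounds hR1 hG1 hG2
      rw [hevalw₀ x, hτdef, hηdef]
      exact hb
    have hη1 : η ≤ 1 := by
      obtain ⟨ha, hb⟩ := hw₀K _ (zero_mem_unitBox m)
      linarith
    -- degree data
    set D : ℕ := Finset.univ.sup (fun i => (h i).totalDegree) with hD
    have hdeg_hi : ∀ i, (h i).totalDegree ≤ D := fun i => by
      rw [hD]
      exact Finset.le_sup (f := fun i => (h i).totalDegree) (Finset.mem_univ i)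
    have hCMsub : ∀ i : Fin r, (C M - h i).totalDegree ≤ D := by
      intro i
      refine le_trans (totalDegree_sub _ _) (max_le ?_ (hdeg_hi i))
      rw [totalDegree_C]
      exact Nat.zero_le D
    set e₁ : ℕ := 2 * (k * D) + D with he₁
    have hdegG : G.totalDegree ≤ e₁ := by
      rw [hG]
      refine le_trans (totalDegree_finset_sum _ _) (Finset.sup_le fun i _ => ?_)
      refine le_trans (totalDegree_mul _ _) ?_
      rw [he₁]
      have h1 : (((C M - h i) ^ k) ^ 2).totalDegree ≤ 2 * (k * D) := by
        refine le_trans (totalDegree_pow _ 2) ?_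
        refine Nat.mul_le_mul_left 2 ?_
        exact le_trans (totalDegree_pow _ k) (Nat.mul_le_mul_left k (hCMsub i))
      exact Nat.add_le_add h1 (hdeg_hi i)
    have hdegw₀ : w₀.totalDegree ≤ e₁ := by
      rw [hw₀]
      refine le_trans (totalDegree_add _ _) (max_le ?_ ?_)
      · rw [totalDegree_one]; exact Nat.zero_le e₁
      · exact le_trans (totalDegree_mul _ _) (by rw [totalDegree_C, zero_add]; exact hdegG)
    have hw₀1eq : w₀ - 1 = C τ * G := by rw [hw₀]; ring
    have hdegw₀1 : (w₀ - 1).totalDegree ≤ e₁ := by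
      rw [hw₀1eq]
      exact le_trans (totalDegree_mul _ _) (by rw [totalDegree_C, zero_add]; exact hdegG)
    have hdegw₀sq : (w₀ ^ 2).totalDegree ≤ 2 * e₁ :=
      le_trans (totalDegree_pow _ 2) (Nat.mul_le_mul_left 2 hdegw₀)
    -- constants for the Putinar premise
    set eF : ℝ := 4 * (e₁:ℝ) + 4 with heFdef
    have he₁0 : (0:ℝ) ≤ (e₁:ℝ) := Nat.cast_nonneg e₁
    have heF1 : (1:ℝ) ≤ eF := by rw [heFdef]; linarith only [he₁0]
    have heF0 : (0:ℝ) < eF := by linarith only [heF1]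
    set E₂ : ℝ := c * γ₂ * eF ^ a₂ with hE₂
    have heFa1 : (1:ℝ) ≤ eF ^ a₂ := Real.one_le_rpow heF1 (by linarith only [ha₂1])
    have hcE₂ : c ≤ E₂ := by
      calc c = c * 1 := (mul_one c).symm
        _ ≤ c * (γ₂ * eF ^ a₂) := mul_le_mul_of_nonneg_left (one_le_mul_real hγ₂ heFa1) hc0.le
        _ = E₂ := by rw [hE₂]; ring
    have hE₂1 : (1:ℝ) ≤ E₂ := le_trans hc1 hcE₂
    have hE₂0 : (0:ℝ) < E₂ := lt_of_lt_of_le one_pos hE₂1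
    have hcoefE : γ₂ * eF ^ a₂ * (c / E₂) ≤ 1 := by
      have heq : γ₂ * eF ^ a₂ * (c / E₂) = 1 := by
        rw [hE₂]
        field_simp
      rw [heq]
    -- the constant and threshold
    have hCpos : 0 < V * ((2 * η)⁻¹ + E₂) + 1 :=
      add_pos_of_nonneg_of_pos
        (mul_nonneg hV0 (add_nonneg (inv_nonneg.2 (by linarith)) hE₂0.le)) one_pos
    refine ⟨V * ((2 * η)⁻¹ + E₂) + 1, hCpos,
      ⌈E₂ ^ (6 * (m:ℝ) * L)⌉₊ + ⌈eF ^ (2:ℕ)⌉₊ + 1, ?_⟩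
    intro ℓ hℓ
    have ht1 : (1:ℝ) ≤ (ℓ:ℝ) := by
      have : 1 ≤ ℓ := by omega
      exact_mod_cast this
    have ht0 : (0:ℝ) < (ℓ:ℝ) := lt_of_lt_of_le one_pos ht1
    have htE : E₂ ^ (6 * (m:ℝ) * L) ≤ (ℓ:ℝ) := by
      refine Nat.ceil_le.mp ?_
      omega
    have hteF : eF ^ (2:ℕ) ≤ (ℓ:ℝ) := by
      refine Nat.ceil_le.mp ?_
      omega
    set s : ℝ := (ℓ:ℝ) ^ δ with hs
    have hs1 : 1 ≤ s := Real.one_le_rpow ht1 hδ0.le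
    have hs0 : 0 < s := lt_of_lt_of_le one_pos hs1
    have hsE : E₂ ≤ s := by
      have h1 : (E₂ ^ (6 * (m:ℝ) * L)) ^ δ ≤ (ℓ:ℝ) ^ δ :=
        Real.rpow_le_rpow (Real.rpow_nonneg hE₂0.le _) htE hδ0.le
      rwa [← Real.rpow_mul hE₂0.le, hδ6, Real.rpow_one] at h1
    set ε : ℝ := E₂ / s with hε
    have hε0 : 0 < ε := div_pos hE₂0 hs0
    have hε1 : ε ≤ 1 := (div_le_one hs0).2 hsE
    -- the key size bound : eF * s ≤ ℓ
    have hδhalf : δ ≤ 1/2 := by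
      have hmL : (1:ℝ) ≤ (m:ℝ) * L := one_le_mul_real hm1 hL
      have h2 : (2:ℝ) ≤ 6 * (m:ℝ) * L := by linarith only [hmL]
      have h3 : (6 * (m:ℝ) * L)⁻¹ ≤ (2:ℝ)⁻¹ := inv_anti₀ (by norm_num) h2
      rw [hδdef]
      linarith only [h3]
    have heFs : eF * s ≤ (ℓ:ℝ) := by
      have h1 : eF ≤ (ℓ:ℝ) ^ ((2:ℝ)⁻¹) := by
        have h2 : (eF ^ ((2:ℝ))) ^ ((2:ℝ)⁻¹) ≤ ((ℓ:ℝ)) ^ ((2:ℝ)⁻¹) := by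
          refine Real.rpow_le_rpow (Real.rpow_nonneg heF0.le _) ?_ (by norm_num)
          rw [show ((2:ℝ)) = ((2:ℕ):ℝ) by norm_num, Real.rpow_natCast]
          exact hteF
        rwa [← Real.rpow_mul heF0.le, mul_inv_cancel₀ (by norm_num : (2:ℝ) ≠ 0),
          Real.rpow_one] at h2
      have h3 : (ℓ:ℝ) ^ ((2:ℝ)⁻¹) ≤ (ℓ:ℝ) ^ (1 - δ) :=
        Real.rpow_le_rpow_of_exponent_le ht1 (by linarith)
      have h4 : eF * s ≤ (ℓ:ℝ) ^ (1 - δ) * s := by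
        exact mul_le_mul_of_nonneg_right (le_trans h1 h3) hs0.le
      have h5 : (ℓ:ℝ) ^ (1 - δ) * s = (ℓ:ℝ) := by
        rw [hs, ← Real.rpow_add ht0]
        rw [show (1 - δ) + δ = 1 by ring, Real.rpow_one]
      linarith only [h4, h5]
    set j := ⌈s⌉₊ with hjd
    have hj1 : 1 ≤ j := Nat.one_le_ceil_iff.2 hs0
    have hsj : s ≤ (j:ℝ) := Nat.le_ceil s
    have hj2 : (j:ℝ) ≤ 2 * s := by
      have h1 := Nat.ceil_lt_add_one hs0.le
      linarith only [h1, hs1]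
    -- remaining gadgets
    set A : MvPolynomial (Fin m) ℝ := ∑ i ∈ Finset.range j, (w₀ ^ 2) ^ i with hA
    set u : MvPolynomial (Fin m) ℝ := (w₀ ^ 2) ^ j with hu
    set W : MvPolynomial (Fin m) ℝ := u + C ε with hW
    have hASOS : IsSOS A := by
      have heq : ∑ i ∈ Finset.range j, (w₀ ^ 2) ^ i
          = ∑ i ∈ Finset.range j, (w₀ ^ i) ^ 2 :=
        Finset.sum_congr rfl fun i _ => by rw [← pow_mul, ← pow_mul, mul_comm]
      rw [hA, heq]
      exact isSOS_sum _ _ fun i _ => isSOS_sq _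
    set σ₀ : MvPolynomial (Fin m) ℝ := A * (w₀ - 1) ^ 2 + C ε with hσ₀
    set s' : Fin r → MvPolynomial (Fin m) ℝ :=
      fun i => (A + A) * (C τ * ((C M - h i) ^ k) ^ 2) with hs'
    have hσ₀SOS : IsSOS σ₀ := by
      rw [hσ₀]
      exact isSOS_add (isSOS_mul hASOS (isSOS_sq _)) (isSOS_C hε0.le)
    have hs'SOS : ∀ i, IsSOS (s' i) := by
      intro i
      rw [hs']
      exact isSOS_mul (isSOS_add hASOS hASOS)
        (isSOS_mul (isSOS_C hτ0.le) (isSOS_sq _))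
    -- degrees
    have hdegA : A.totalDegree ≤ j * (2 * e₁) := by
      rw [hA]
      refine le_trans (totalDegree_finset_sum _ _) (Finset.sup_le fun i hi => ?_)
      refine le_trans (totalDegree_pow _ i) ?_
      exact Nat.mul_le_mul (le_of_lt (Finset.mem_range.1 hi)) hdegw₀sq
    have hdegu : u.totalDegree ≤ j * (2 * e₁) := by
      rw [hu]
      exact le_trans (totalDegree_pow _ j) (Nat.mul_le_mul_left j hdegw₀sq)
    have hjeN : (j + 1) * e₁ ≤ ℓ := by
      have h3s : ((j:ℝ) + 1) ≤ 3 * s := by linarith only [hj2, hs1]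
      have h4 : ((j:ℝ) + 1) * (e₁:ℝ) ≤ 3 * s * (e₁:ℝ) :=
        mul_le_mul_of_nonneg_right h3s he₁0
      have h5 : 3 * s * (e₁:ℝ) ≤ eF * s := by
        have heq1 : 3 * s * (e₁:ℝ) = s * (3 * (e₁:ℝ)) := by ring
        have heq2 : eF * s = s * eF := by ring
        rw [heq1, heq2]
        refine mul_le_mul_of_nonneg_left ?_ hs0.le
        rw [heFdef]
        linarith only [he₁0]
      have h6 : (((j + 1) * e₁ : ℕ) : ℝ) ≤ (ℓ:ℝ) := by
        push_cast
        linarith only [h4, h5, heFs]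
      exact_mod_cast h6
    have hdeg2ℓ : (j + 1) * (2 * e₁) ≤ 2 * ℓ := by
      have : (j + 1) * (2 * e₁) = 2 * ((j + 1) * e₁) := by ring
      omega
    have hσ₀deg : σ₀.totalDegree ≤ 2 * ℓ := by
      refine le_trans ?_ hdeg2ℓ
      rw [hσ₀]
      refine le_trans (totalDegree_add _ _) (max_le ?_ ?_)
      · refine le_trans (totalDegree_mul _ _) ?_
        have h1 : ((w₀ - 1) ^ 2).totalDegree ≤ 2 * e₁ :=
          le_trans (totalDegree_pow _ 2) (Nat.mul_le_mul_left 2 hdegw₀1)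
        calc A.totalDegree + ((w₀ - 1) ^ 2).totalDegree ≤ j * (2 * e₁) + 2 * e₁ :=
              Nat.add_le_add hdegA h1
          _ = (j + 1) * (2 * e₁) := by ring
      · rw [totalDegree_C]; exact Nat.zero_le _
    have hs'deg : ∀ i, (s' i * h i).totalDegree ≤ 2 * ℓ := by
      intro i
      refine le_trans ?_ hdeg2ℓ
      rw [hs']
      have h1 : ((A + A) : MvPolynomial (Fin m) ℝ).totalDegree ≤ j * (2 * e₁) :=
        le_trans (totalDegree_add _ _) (max_le hdegA hdegA)
      have h2 : ((C τ * ((C M - h i) ^ k) ^ 2) : MvPolynomial (Fin m) ℝ).totalDegree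
          ≤ 2 * (k * D) := by
        refine le_trans (totalDegree_mul _ _) ?_
        rw [totalDegree_C, zero_add]
        refine le_trans (totalDegree_pow _ 2) (Nat.mul_le_mul_left 2 ?_)
        exact le_trans (totalDegree_pow _ k) (Nat.mul_le_mul_left k (hCMsub i))
      calc ((A + A) * (C τ * ((C M - h i) ^ k) ^ 2) * h i).totalDegree
          ≤ ((A + A) * (C τ * ((C M - h i) ^ k) ^ 2)).totalDegree + (h i).totalDegree :=
            totalDegree_mul _ _
        _ ≤ (((A + A)).totalDegree + ((C τ * ((C M - h i) ^ k) ^ 2)).totalDegree)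
            + (h i).totalDegree := Nat.add_le_add_right (totalDegree_mul _ _) _
        _ ≤ (j * (2 * e₁) + 2 * (k * D)) + D := by
            refine Nat.add_le_add (Nat.add_le_add h1 h2) (hdeg_hi i)
        _ ≤ (j + 1) * (2 * e₁) := by
            rw [he₁]
            ring_nf
            omega
    -- the representation
    have hgeom : A * (w₀ ^ 2 - 1) = (w₀ ^ 2) ^ j - 1 := by
      rw [hA]
      exact geom_sum_mul _ _
    have hsum : ∑ i, s' i * h i = (A + A) * (C τ * G) := by
      rw [hG, Finset.mul_sum, Finset.mul_sum]
      refine Finset.sum_congr rfl fun i _ => ?_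
      rw [hs']
      ring
    have hrep : W - 1 = σ₀ + ∑ i, s' i * h i := by
      rw [hW, hu, hσ₀, hsum, ← hw₀1eq]
      linear_combination -hgeom
    have hmem1 : memQM h ℓ (W - 1) :=
      ⟨σ₀, s', hσ₀SOS, hs'SOS, hσ₀deg, hs'deg, hrep⟩
    -- membership in Q(f) via the effective Putinar bound
    have hevalu : ∀ x : Fin m → ℝ, eval x u = ((eval x w₀) ^ 2) ^ j := by
      intro x
      rw [hu]
      simp [map_pow]
    have huK : ∀ x ∈ unitBox (Fin m), 0 ≤ eval x u ∧ eval x u ≤ ((1 - η) ^ 2) ^ j := by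
      intro x hx
      obtain ⟨h0, h1⟩ := hw₀K x hx
      constructor
      · rw [hevalu x]
        positivity
      · rw [hevalu x]
        exact pow_le_pow_left₀ (sq_nonneg _) (pow_le_pow_left₀ h0 h1 2) j
    have hevalW : ∀ x : Fin m → ℝ, eval x W = eval x u + ε := fun x => by
      rw [hW, map_add, eval_C]
    have huone : ∀ x ∈ unitBox (Fin m), eval x u ≤ 1 := fun x hx =>
      le_trans (huK x hx).2 (u_le_one hη0 hη1 j)
    have hminW : ε ≤ polyMinOn (semialgSet (fun i : Fin m => 1 - X i ^ 2)) W := by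
      rw [hSf]
      exact le_minOn hKne fun x hx => by
        rw [hevalW]
        have h1 := (huK x hx).1
        linarith only [h1]
    have hminW' : 0 < polyMinOn (semialgSet (fun i : Fin m => 1 - X i ^ 2)) W :=
      lt_of_lt_of_le hε0 hminW
    have hnormW : polyNorm W ≤ c := polyNorm_le fun x hx => by
      rw [hevalW, hcdef, abs_le]
      have h0 := (huK x hx).1
      have h1 := huone x hx
      constructor <;> linarith only [h0, h1, hε0, hε1, hcG]
    have hDcast : (W.totalDegree : ℝ) ≤ eF * s := by
      have h1 : W.totalDegree ≤ j * (2 * e₁) := by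
        rw [hW]
        refine le_trans (totalDegree_add _ _) (max_le hdegu ?_)
        rw [totalDegree_C]; exact Nat.zero_le _
      have h2 : (W.totalDegree : ℝ) ≤ (j:ℝ) * (2 * (e₁:ℝ)) := by
        exact_mod_cast h1
      have h3 : (j:ℝ) * (2 * (e₁:ℝ)) ≤ (2 * s) * (2 * (e₁:ℝ)) :=
        mul_le_mul_of_nonneg_right hj2 (by linarith only [he₁0])
      have h4 : (2 * s) * (2 * (e₁:ℝ)) ≤ eF * s := by
        have heq1 : (2 * s) * (2 * (e₁:ℝ)) = s * (4 * (e₁:ℝ)) := by ring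
        have heq2 : eF * s = s * eF := by ring
        rw [heq1, heq2]
        refine mul_le_mul_of_nonneg_left ?_ hs0.le
        rw [heFdef]
        linarith only [he₁0]
      linarith only [h2, h3, h4]
    have hratio2 : polyNorm W / polyMinOn (semialgSet (fun i : Fin m => 1 - X i ^ 2)) W
        ≤ c / E₂ * s := by
      have h1 : polyNorm W / polyMinOn (semialgSet (fun i : Fin m => 1 - X i ^ 2)) W ≤ c / ε := by
        gcongr
      have h2 : c / ε = c / E₂ * s := by
        rw [hε, div_div_eq_mul_div]
        ring
      linarith only [h1, h2.le, h2.ge]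
    have hratio2' : 0 ≤ polyNorm W / polyMinOn (semialgSet (fun i : Fin m => 1 - X i ^ 2)) W :=
      div_nonneg (polyNorm_nonneg _) hminW'.le
    have harith2 : γ₂ * (W.totalDegree : ℝ) ^ a₂ *
        (polyNorm W / polyMinOn (semialgSet (fun i : Fin m => 1 - X i ^ 2)) W) ^ b₂ ≤ (ℓ:ℝ) := by
      have hkey := key_chain hγ₂0 heF1 hc0 hcE₂ hs1 hDcast (Nat.cast_nonneg _)
        hratio2 hratio2' ha₂1 hb₂1 hcoefE
      have hsab : s ^ (a₂ + b₂) ≤ (ℓ:ℝ) := by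
        rw [hs, ← Real.rpow_mul ht0.le, hδab2]
        calc (ℓ:ℝ) ^ L⁻¹ ≤ (ℓ:ℝ) ^ (1:ℝ) :=
              Real.rpow_le_rpow_of_exponent_le ht1 hLinv
          _ = (ℓ:ℝ) := Real.rpow_one _
      linarith only [hkey, hsab]
    have hmem2 : memQM (fun i : Fin m => 1 - X i ^ 2) ℓ W := hput₂ W ℓ hminW' harith2
    -- conclusion
    set T := {t : ℝ | ∃ w : MvPolynomial (Fin m) ℝ,
        memQM h ℓ (w - 1) ∧ memQM (fun i : Fin m => 1 - X i ^ 2) ℓ w ∧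
        t = ∫ x in unitBox (Fin m), eval x w} with hT
    have htT : (∫ x in unitBox (Fin m), eval x W) ∈ T := ⟨W, hmem1, hmem2, rfl⟩
    have hIW : ∫ x in unitBox (Fin m), eval x W
        = (∫ x in unitBox (Fin m), eval x u) + ε * V := by
      simp only [hevalW]
      rw [MeasureTheory.integral_add (integrableOn_eval u)
        (MeasureTheory.integrableOn_const (isCompact_unitBox m).measure_lt_top.ne)]
      rw [MeasureTheory.setIntegral_const, smul_eq_mul, MeasureTheory.Measure.real, ← hVdef]
      ring
    have hIu : (∫ x in unitBox (Fin m), eval x u) ≤ V * (2 * (j:ℝ) * η)⁻¹ := by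
      have hbd : ∀ x ∈ unitBox (Fin m), eval x u ≤ (2 * (j:ℝ) * η)⁻¹ := fun x hx =>
        le_trans (huK x hx).2 (bernoulli_bound hη0 hη1 hj1)
      calc (∫ x in unitBox (Fin m), eval x u)
          ≤ ∫ _ in unitBox (Fin m), (2 * (j:ℝ) * η)⁻¹ :=
            MeasureTheory.setIntegral_mono_on (integrableOn_eval u)
              (MeasureTheory.integrableOn_const
                (isCompact_unitBox m).measure_lt_top.ne)
              (measurableSet_unitBox m) hbd
        _ = V * (2 * (j:ℝ) * η)⁻¹ := by
            rw [MeasureTheory.setIntegral_const, smul_eq_mul, MeasureTheory.Measure.real, ← hVdef]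
    have hjs : (2 * (j:ℝ) * η)⁻¹ ≤ (2 * η)⁻¹ * s⁻¹ := by
      have h2 : s * η ≤ (j:ℝ) * η := mul_le_mul_of_nonneg_right hsj hη0.le
      have h1 : (2 * η) * s ≤ 2 * (j:ℝ) * η := by linarith only [h2]
      have h0 : 0 < (2 * η) * s := mul_pos (mul_pos two_pos hη0) hs0
      rw [← mul_inv]
      exact inv_anti₀ h0 h1
    have hTlb : ∀ v ∈ T, lam ≤ v := by
      rintro v ⟨w', hw'1, hw'2, rfl⟩
      exact hTlbgen ℓ w' hw'1 hw'2
    have hbdd : BddBelow T := ⟨lam, fun v hv => hTlb v hv⟩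
    have hlow : lam ≤ sInf T := le_csInf ⟨_, htT⟩ hTlb
    have hup : sInf T ≤ ∫ x in unitBox (Fin m), eval x W := csInf_le hbdd htT
    constructor
    · linarith only [hlow]
    · rw [hmaxL, one_div, ← hδdef, Real.rpow_neg ht0.le, ← hs]
      have hsinv : 0 ≤ s⁻¹ := inv_nonneg.2 hs0.le
      have hεV : ε * V = E₂ * V * s⁻¹ := by
        rw [hε]
        field_simp
      have hVj : V * (2 * (j:ℝ) * η)⁻¹ ≤ V * ((2 * η)⁻¹ * s⁻¹) :=
        mul_le_mul_of_nonneg_left hjs hV0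
      have hup2 : sInf T - lam ≤ V * ((2 * η)⁻¹ * s⁻¹) + E₂ * V * s⁻¹ := by
        rw [hIW] at hup
        linarith only [hup, hIu, hVj, hεV.le, hεV.ge, hlam0.le, hlam0.ge]
      have hexp : (V * ((2 * η)⁻¹ + E₂) + 1) * s⁻¹
          = V * ((2 * η)⁻¹ * s⁻¹) + E₂ * V * s⁻¹ + s⁻¹ := by ring
      linarith only [hexp.le, hexp.ge, hup2, hsinv]
  · -- nonempty case
    set P : ℝ := (2:ℝ) ^ a₁ with hP
    set Q : ℝ := (2:ℝ) ^ a₂ with hQ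
    have hP1 : 1 ≤ P := Real.one_le_rpow one_le_two (by linarith)
    have hQ1 : 1 ≤ Q := Real.one_le_rpow one_le_two (by linarith)
    set E : ℝ := c * γ₁ * γ₂ * P * Q with hE
    have hprod1 : (1:ℝ) ≤ γ₁ * γ₂ * P * Q :=
      one_le_mul_real (one_le_mul_real (one_le_mul_real hγ₁ hγ₂) hP1) hQ1
    have hcE : c ≤ E := by
      calc c = c * 1 := (mul_one c).symm
        _ ≤ c * (γ₁ * γ₂ * P * Q) := mul_le_mul_of_nonneg_left hprod1 hc0.le
        _ = E := by rw [hE]; ring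
    have hE1 : (1:ℝ) ≤ E := le_trans hc1 hcE
    have hE0 : (0:ℝ) < E := lt_of_lt_of_le one_pos hE1
    have hcoef1 : γ₁ * (2:ℝ) ^ a₁ * (c / E) ≤ 1 := by
      have heq : γ₁ * P * (c / E) = 1 / (γ₂ * Q) := by
        rw [hE]
        field_simp
      rw [← hP, heq]
      rw [div_le_one (by positivity)]
      exact one_le_mul_real hγ₂ hQ1
    have hcoef2 : γ₂ * (2:ℝ) ^ a₂ * (c / E) ≤ 1 := by
      have heq : γ₂ * Q * (c / E) = 1 / (γ₁ * P) := by
        rw [hE]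
        field_simp
      rw [← hQ, heq]
      rw [div_le_one (by positivity)]
      exact one_le_mul_real hγ₁ hP1
    have hEV : 0 ≤ E * V := mul_nonneg hE0.le hV0
    have hCpos : 0 < Cc / 2 + E * V + 1 :=
      add_pos_of_nonneg_of_pos (add_nonneg (by linarith) hEV) one_pos
    refine ⟨Cc / 2 + E * V + 1, hCpos, max 1 ⌈E ^ (6 * (m:ℝ) * L)⌉₊, ?_⟩
    intro ℓ hℓ
    have ht1 : (1:ℝ) ≤ (ℓ:ℝ) := by exact_mod_cast le_trans (le_max_left _ _) hℓ
    have ht0 : (0:ℝ) < (ℓ:ℝ) := lt_of_lt_of_le one_pos ht1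
    have htE : E ^ (6 * (m:ℝ) * L) ≤ (ℓ:ℝ) :=
      Nat.ceil_le.mp (le_trans (le_max_right _ _) hℓ)
    set s : ℝ := (ℓ:ℝ) ^ δ with hs
    have hs1 : 1 ≤ s := Real.one_le_rpow ht1 hδ0.le
    have hs0 : 0 < s := lt_of_lt_of_le one_pos hs1
    have hsE : E ≤ s := by
      have h1 : (E ^ (6 * (m:ℝ) * L)) ^ δ ≤ (ℓ:ℝ) ^ δ :=
        Real.rpow_le_rpow (Real.rpow_nonneg hE0.le _) htE hδ0.le
      rwa [← Real.rpow_mul hE0.le, hδ6, Real.rpow_one] at h1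
    set ε : ℝ := E / s with hε
    have hε0 : 0 < ε := div_pos hE0 hs0
    have hε1 : ε ≤ 1 := (div_le_one hs0).2 hsE
    set d := ⌈s⌉₊ with hd
    have hd1 : 1 ≤ d := Nat.one_le_ceil_iff.2 hs0
    have hsd : s ≤ (d:ℝ) := Nat.le_ceil s
    have hd2 : (d:ℝ) ≤ 2 * s := by
      have := Nat.ceil_lt_add_one hs0.le
      linarith
    obtain ⟨w, hwdeg, hw1, hw0, hwcG, hwint⟩ := happ d hd1
    set W := w + C ε with hW
    have hevalW : ∀ x, eval x W = eval x w + ε := fun x => by rw [hW, map_add, eval_C]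
    have hevalW1 : ∀ x, eval x (W - 1) = eval x w + ε - 1 := fun x => by
      rw [map_sub, map_one, hevalW]
    have hdegW : W.totalDegree ≤ d :=
      le_trans (totalDegree_add w (C ε))
        (max_le hwdeg (le_trans (le_of_eq (totalDegree_C _)) (Nat.zero_le d)))
    have hWm1 : W - 1 = w + C (ε - 1) := by rw [map_sub, C_1, hW]; ring
    have hdegW1 : (W - 1).totalDegree ≤ d := by
      rw [hWm1]
      exact le_trans (totalDegree_add _ _)
        (max_le hwdeg (le_trans (le_of_eq (totalDegree_C _)) (Nat.zero_le d)))
    -- min bounds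
    have hminW1 : ε ≤ polyMinOn (semialgSet h) (W - 1) :=
      le_minOn hne fun x hx => by
        rw [hevalW1]
        have := hw1 x hx
        linarith
    have hminW1' : 0 < polyMinOn (semialgSet h) (W - 1) := lt_of_lt_of_le hε0 hminW1
    have hminW : ε ≤ polyMinOn (semialgSet (fun i : Fin m => 1 - X i ^ 2)) W := by
      rw [hSf]
      exact le_minOn hKne fun x hx => by
        rw [hevalW]
        have := hw0 x hx
        linarith
    have hminW' : 0 < polyMinOn (semialgSet (fun i : Fin m => 1 - X i ^ 2)) W :=
      lt_of_lt_of_le hε0 hminW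
    -- norm bounds
    have hnormW1 : polyNorm (W - 1) ≤ c := polyNorm_le fun x hx => by
      rw [hevalW1, hcdef, abs_le]
      have h0 := hw0 x hx
      have hG := hwcG x hx
      constructor <;> linarith
    have hnormW : polyNorm W ≤ c := polyNorm_le fun x hx => by
      rw [hevalW, hcdef, abs_le]
      have h0 := hw0 x hx
      have hG := hwcG x hx
      constructor <;> linarith
    -- ratio bounds
    have hratio1 : polyNorm (W - 1) / polyMinOn (semialgSet h) (W - 1) ≤ c / E * s := by
      have h1 : polyNorm (W - 1) / polyMinOn (semialgSet h) (W - 1) ≤ c / ε := by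
        gcongr
      have h2 : c / ε = c / E * s := by
        rw [hε, div_div_eq_mul_div]
        ring
      linarith
    have hratio1' : 0 ≤ polyNorm (W - 1) / polyMinOn (semialgSet h) (W - 1) :=
      div_nonneg (polyNorm_nonneg _) hminW1'.le
    have hratio2 : polyNorm W / polyMinOn (semialgSet (fun i : Fin m => 1 - X i ^ 2)) W
        ≤ c / E * s := by
      have h1 : polyNorm W / polyMinOn (semialgSet (fun i : Fin m => 1 - X i ^ 2)) W ≤ c / ε := by
        gcongr
      have h2 : c / ε = c / E * s := by
        rw [hε, div_div_eq_mul_div]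
        ring
      linarith
    have hratio2' : 0 ≤ polyNorm W / polyMinOn (semialgSet (fun i : Fin m => 1 - X i ^ 2)) W :=
      div_nonneg (polyNorm_nonneg _) hminW'.le
    -- effective Putinar premises
    have hDcast1 : ((W - 1).totalDegree : ℝ) ≤ 2 * s :=
      le_trans (by exact_mod_cast hdegW1) hd2
    have hDcast2 : (W.totalDegree : ℝ) ≤ 2 * s :=
      le_trans (by exact_mod_cast hdegW) hd2
    have harith1 : γ₁ * ((W - 1).totalDegree : ℝ) ^ a₁ *
        (polyNorm (W - 1) / polyMinOn (semialgSet h) (W - 1)) ^ b₁ ≤ (ℓ:ℝ) := by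
      have hkey := key_chain hγ₁0 one_le_two hc0 hcE hs1 hDcast1 (Nat.cast_nonneg _)
        hratio1 hratio1' ha₁1 hb₁1 hcoef1
      have hsab : s ^ (a₁ + b₁) = (ℓ:ℝ) := by
        rw [hs, ← Real.rpow_mul ht0.le, hδab1, Real.rpow_one]
      linarith [hkey, hsab.le, hsab.ge]
    have harith2 : γ₂ * (W.totalDegree : ℝ) ^ a₂ *
        (polyNorm W / polyMinOn (semialgSet (fun i : Fin m => 1 - X i ^ 2)) W) ^ b₂ ≤ (ℓ:ℝ) := by
      have hkey := key_chain hγ₂0 one_le_two hc0 hcE hs1 hDcast2 (Nat.cast_nonneg _)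
        hratio2 hratio2' ha₂1 hb₂1 hcoef2
      have hsab : s ^ (a₂ + b₂) ≤ (ℓ:ℝ) := by
        rw [hs, ← Real.rpow_mul ht0.le, hδab2]
        calc (ℓ:ℝ) ^ L⁻¹ ≤ (ℓ:ℝ) ^ (1:ℝ) :=
              Real.rpow_le_rpow_of_exponent_le ht1 hLinv
          _ = (ℓ:ℝ) := Real.rpow_one _
      linarith
    have hmem1 : memQM h ℓ (W - 1) := hput₁ (W - 1) ℓ hminW1' harith1
    have hmem2 : memQM (fun i : Fin m => 1 - X i ^ 2) ℓ W := hput₂ W ℓ hminW' harith2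
    set T := {t : ℝ | ∃ w : MvPolynomial (Fin m) ℝ,
        memQM h ℓ (w - 1) ∧ memQM (fun i : Fin m => 1 - X i ^ 2) ℓ w ∧
        t = ∫ x in unitBox (Fin m), eval x w} with hT
    have htT : (∫ x in unitBox (Fin m), eval x W) ∈ T := ⟨W, hmem1, hmem2, rfl⟩
    have hIW : ∫ x in unitBox (Fin m), eval x W
        = (∫ x in unitBox (Fin m), eval x w) + ε * V := by
      simp only [hevalW]
      rw [MeasureTheory.integral_add (integrableOn_eval w)
        (MeasureTheory.integrableOn_const (isCompact_unitBox m).measure_lt_top.ne)]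
      rw [MeasureTheory.setIntegral_const, smul_eq_mul, MeasureTheory.Measure.real, ← hVdef]
      ring
    have hTlb : ∀ u ∈ T, lam ≤ u := by
      rintro u ⟨w', hw'1, hw'2, rfl⟩
      exact hTlbgen ℓ w' hw'1 hw'2
    have hbdd : BddBelow T := ⟨lam, fun u hu => hTlb u hu⟩
    have hlow : lam ≤ sInf T := le_csInf ⟨_, htT⟩ hTlb
    have hup : sInf T ≤ ∫ x in unitBox (Fin m), eval x W := csInf_le hbdd htT
    constructor
    · linarith
    · rw [hmaxL, one_div, ← hδdef, Real.rpow_neg ht0.le, ← hs]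
      have hsinv : 0 ≤ s⁻¹ := inv_nonneg.2 hs0.le
      have hfrac : Cc / (2 * (d:ℝ)) ≤ Cc / 2 * s⁻¹ := by
        have h1 : Cc / (2 * (d:ℝ)) ≤ Cc / (2 * s) := by
          gcongr
        have h2 : Cc / (2 * s) = Cc / 2 * s⁻¹ := by
          field_simp
        linarith
      have hεV : ε * V = E * V * s⁻¹ := by
        rw [hε]
        field_simp
      have hup2 : sInf T - lam ≤ Cc / (2 * (d:ℝ)) + ε * V := by
        rw [hIW] at hup
        linarith
      have hfin : Cc / 2 * s⁻¹ + E * V * s⁻¹ ≤ (Cc / 2 + E * V + 1) * s⁻¹ := by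
        have hexp : (Cc / 2 + E * V + 1) * s⁻¹ = Cc / 2 * s⁻¹ + E * V * s⁻¹ + s⁻¹ := by ring
        rw [hexp]
        linarith
      linarith
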